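/- Let g = B_n^+ and f = e*_{ε_i} ∈ g* (dual basis functional to the root vector e_{ε_i}), 1 ≤ i ≤ n. Then the radical g^f = {x ∈ g : f([x,y]) = 0 ∀y ∈ g} is spanned by the root vectors e_β with β ∉ S(ε_i) = ⋃_{k=i+1}^{n}{ε_i − ε_k, ε_k}; consequently dim g/g^f = 2(n − i). -/

import Mathlib

/-! For `x ∈ g`, which is strictly upper triangular, `f([x, e_β])` vanishes unless
`β ∈ S(ε_i)`, while `f([x, e_{ε_k}]) = x_{i,k}` and `f([x, e_{ε_i−ε_k}]) = −x_{k,n+1}` for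
`i < k ≤ n`. So the radical is cut out of `g` by the `2(n − i)` coordinates `x_{i,k}`, `x_{k,n+1}`.
These coordinates vanish on the root vectors outside `S(ε_i)` and are the dual basis of the root
vectors `e_{ε_i−ε_k}`, `e_{ε_k}` in `S(ε_i)`; hence `g = W ⊕ span {e_β : β ∈ S(ε_i)}` with the
radical equal to `W`. -/

open Matrix
open Fin.NatCast

/-- Roots of `B_n`: `Sum.inl (false, a, b)` is `ε_a − ε_b`, `Sum.inl (true, a, b)` is
`ε_a + ε_b` (with `a < b`), and `Sum.inr a` is the short root `ε_a`. -/
abbrev BnRoot : Type := (Bool × ℕ × ℕ) ⊕ ℕ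

/-- `β` is a positive root of `B_n`. -/
def isPosB (n : ℕ) : BnRoot → Prop
  | Sum.inl (_, a, b) => 1 ≤ a ∧ a < b ∧ b ≤ n
  | Sum.inr a => 1 ≤ a ∧ a ≤ n

/-- The matrix unit `E_{ab}` (1-based indices) inside the `(2n+1) × (2n+1)` matrices. -/
noncomputable def EB (n a b : ℕ) : Matrix (Fin (2 * n + 1)) (Fin (2 * n + 1)) ℂ :=
  Matrix.single ((a - 1 : ℕ) : Fin (2 * n + 1)) ((b - 1 : ℕ) : Fin (2 * n + 1)) 1

/-- The root vectors of `B_n⁺`. -/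
noncomputable def vecB (n : ℕ) : BnRoot → Matrix (Fin (2 * n + 1)) (Fin (2 * n + 1)) ℂ
  | Sum.inl (false, a, b) => EB n a b - EB n (2 * n + 2 - b) (2 * n + 2 - a)
  | Sum.inl (true, a, b) => EB n a (2 * n + 2 - b) - EB n b (2 * n + 2 - a)
  | Sum.inr a => EB n a (n + 1) - EB n (n + 1) (2 * n + 2 - a)

/-- The Lie algebra `g = B_n⁺`, the span of all root vectors. -/
noncomputable def gB (n : ℕ) : Submodule ℂ (Matrix (Fin (2 * n + 1)) (Fin (2 * n + 1)) ℂ) :=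
  Submodule.span ℂ {m | ∃ β : BnRoot, isPosB n β ∧ m = vecB n β}

/-- `β ∈ S(ε_i) = ⋃_{k=i+1}^{n} {ε_i − ε_k, ε_k}`. -/
def inSingEps (n i : ℕ) (β : BnRoot) : Prop :=
  (∃ k, i < k ∧ k ≤ n ∧ β = Sum.inl (false, i, k)) ∨ (∃ k, i < k ∧ k ≤ n ∧ β = Sum.inr k)

open Submodule

section DualFamily

variable {R V ι : Type*} [Ring R] [AddCommGroup V] [Module R V] [DecidableEq ι]
  {Φ : V →ₗ[R] ι → R} {v : ι → V}

theorem linearIndependent_comp_of_apply_eq_single (hv : ∀ s, Φ (v s) = Pi.single s 1) :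
    LinearIndependent R (Φ ∘ v) := by
  simpa [Function.comp_def, hv] using Pi.linearIndependent_single_one ι R

theorem mem_sup_span_range_and_eq_zero_iff (hv : ∀ s, Φ (v s) = Pi.single s 1)
    {W : Submodule R V} (hW : W ≤ LinearMap.ker Φ) {x : V} :
    x ∈ W ⊔ span R (Set.range v) ∧ Φ x = 0 ↔ x ∈ W := by
  refine ⟨fun ⟨hx, hΦx⟩ => ?_, fun hx => ⟨mem_sup_left hx, hW hx⟩⟩
  obtain ⟨w, hw, u, hu, rfl⟩ := mem_sup.1 hx
  have hu_ker : Φ u = 0 := by rwa [map_add, hW hw, zero_add] at hΦx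
  have hu0 : u = 0 := disjoint_def.1
    (range_ker_disjoint (linearIndependent_comp_of_apply_eq_single hv)) u hu hu_ker
  rwa [hu0, add_zero]

end DualFamily

theorem finrank_sup_span_range {K V ι : Type*} [DivisionRing K] [AddCommGroup V] [Module K V]
    [FiniteDimensional K V] [Fintype ι] [DecidableEq ι] {Φ : V →ₗ[K] ι → K} {v : ι → V}
    (hv : ∀ s, Φ (v s) = Pi.single s 1) {W : Submodule K V} (hW : W ≤ LinearMap.ker Φ) :
    Module.finrank K ↥(W ⊔ span K (Set.range v)) = Module.finrank K W + Fintype.card ι := by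
  have hli := linearIndependent_comp_of_apply_eq_single hv
  have hdisj : Disjoint W (span K (Set.range v)) := ((range_ker_disjoint hli).mono_right hW).symm
  have := finrank_sup_add_finrank_inf_eq W (span K (Set.range v))
  rwa [hdisj.eq_bot, finrank_bot, add_zero, finrank_span_eq_card hli.of_comp] at this

namespace Matrix

def strictUpperTriangular (R ι : Type*) [Semiring R] [LinearOrder ι] :
    Submodule R (Matrix ι ι R) where
  carrier := {x | ∀ r c, c ≤ r → x r c = 0}
  add_mem' hx hy r c h := by simp [hx r c h, hy r c h]
  zero_mem' _ _ _ := rfl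
  smul_mem' a x hx r c h := by simp [hx r c h]

end Matrix

abbrev idx (n a : ℕ) : Fin (2 * n + 1) := ((a - 1 : ℕ) : Fin (2 * n + 1))

section Entries

variable {n : ℕ}

theorem idx_val_add_one (r : Fin (2 * n + 1)) : idx n (r.val + 1) = r := by
  simp [idx]

theorem val_idx {a : ℕ} (ha : a ≤ 2 * n + 1) : (idx n a : ℕ) = a - 1 :=
  Fin.val_cast_of_lt (by omega)

theorem idx_inj {a b : ℕ} (ha : 1 ≤ a) (ha' : a ≤ 2 * n + 1) (hb : 1 ≤ b) (hb' : b ≤ 2 * n + 1) :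
    idx n a = idx n b ↔ a = b := by
  rw [Fin.ext_iff, val_idx ha', val_idx hb']; omega

theorem idx_le_idx {a b : ℕ} (ha' : a ≤ 2 * n + 1) (hb' : b ≤ 2 * n + 1) (h : a ≤ b) :
    idx n a ≤ idx n b := by
  rw [Fin.le_iff_val_le_val, val_idx ha', val_idx hb']; omega

theorem EB_idx_apply {a b p q : ℕ} (ha : 1 ≤ a) (ha' : a ≤ 2 * n + 1) (hb : 1 ≤ b)
    (hb' : b ≤ 2 * n + 1) (hp : 1 ≤ p) (hp' : p ≤ 2 * n + 1) (hq : 1 ≤ q) (hq' : q ≤ 2 * n + 1) :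
    EB n a b (idx n p) (idx n q) = if a = p ∧ b = q then 1 else 0 :=
  if_congr (and_congr (idx_inj ha ha' hp hp') (idx_inj hb hb' hq hq')) rfl rfl

theorem mul_EB_idx_apply (x : Matrix (Fin (2 * n + 1)) (Fin (2 * n + 1)) ℂ) {a b p q : ℕ}
    (hb : 1 ≤ b) (hb' : b ≤ 2 * n + 1) (hq : 1 ≤ q) (hq' : q ≤ 2 * n + 1) :
    (x * EB n a b) (idx n p) (idx n q) = if b = q then x (idx n p) (idx n a) else 0 := by
  split_ifs with h
  · subst h; exact (mul_single_apply_same _ _ _ _ _).trans (mul_one _)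
  · exact mul_single_apply_of_ne _ _ _ _ _ (mt (idx_inj hq hq' hb hb').1 (Ne.symm h)) _

theorem EB_mul_idx_apply (x : Matrix (Fin (2 * n + 1)) (Fin (2 * n + 1)) ℂ) {a b p q : ℕ}
    (ha : 1 ≤ a) (ha' : a ≤ 2 * n + 1) (hp : 1 ≤ p) (hp' : p ≤ 2 * n + 1) :
    (EB n a b * x) (idx n p) (idx n q) = if a = p then x (idx n b) (idx n q) else 0 := by
  split_ifs with h
  · subst h; exact (single_mul_apply_same _ _ _ _ _).trans (one_mul _)
  · exact single_mul_apply_of_ne _ _ _ _ _ (mt (idx_inj hp hp' ha ha').1 (Ne.symm h)) _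

theorem gB_le_strictUpperTriangular : gB n ≤ strictUpperTriangular ℂ (Fin (2 * n + 1)) := by
  refine span_le.2 ?_
  rintro _ ⟨β, hβ, rfl⟩ r c hcr
  have hr := r.isLt
  have hcr' : c.val ≤ r.val := hcr
  rw [← idx_val_add_one r, ← idx_val_add_one c]
  rcases β with ⟨_ | _, a, b⟩ | a <;> simp only [isPosB] at hβ <;>
    simp (disch := omega) only [vecB, Matrix.sub_apply, EB_idx_apply] <;>
    rw [if_neg (by omega), if_neg (by omega), sub_zero]

theorem apply_idx_eq_zero_of_mem_gB {x : Matrix (Fin (2 * n + 1)) (Fin (2 * n + 1)) ℂ}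
    (hx : x ∈ gB n) {r c : ℕ} (hcr : c ≤ r) (hr : r ≤ 2 * n + 1) :
    x (idx n r) (idx n c) = 0 :=
  gB_le_strictUpperTriangular hx _ _ (idx_le_idx (by omega) hr hcr)

end Entries

noncomputable def dualEps (n i : ℕ) : Matrix (Fin (2 * n + 1)) (Fin (2 * n + 1)) ℂ →ₗ[ℂ] ℂ :=
  entryLinearMap ℂ ℂ (idx n i) (idx n (n + 1))

section Bracket

variable {n i : ℕ} (x : Matrix (Fin (2 * n + 1)) (Fin (2 * n + 1)) ℂ)

theorem dualEps_commutator_vecB_of_not_inSingEps (hi : 1 ≤ i) (hin : i ≤ n) (hx : x ∈ gB n)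
    {β : BnRoot} (hβ : isPosB n β) (hS : ¬ inSingEps n i β) :
    dualEps n i (x * vecB n β - vecB n β * x) = 0 := by
  rcases β with ⟨_ | _, a, b⟩ | a <;> simp only [isPosB] at hβ
  · have hai : a ≠ i := by rintro rfl; exact hS (.inl ⟨b, hβ.2.1, hβ.2.2, rfl⟩)
    simp (disch := omega) only [dualEps, entryLinearMap_apply, vecB, mul_sub, sub_mul,
      Matrix.sub_apply, mul_EB_idx_apply, EB_mul_idx_apply, if_neg, sub_zero]
  · simp (disch := omega) only [dualEps, entryLinearMap_apply, vecB, mul_sub, sub_mul,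
      Matrix.sub_apply, mul_EB_idx_apply, EB_mul_idx_apply, if_neg, sub_zero,
      apply_idx_eq_zero_of_mem_gB hx, ite_self]
  · have hai : a ≤ i := by
      by_contra h; exact hS (.inr ⟨a, by omega, hβ.2, rfl⟩)
    simp (disch := omega) only [dualEps, entryLinearMap_apply, vecB, mul_sub, sub_mul,
      Matrix.sub_apply, mul_EB_idx_apply, EB_mul_idx_apply, if_neg, sub_zero,
      apply_idx_eq_zero_of_mem_gB hx, ite_self]

theorem dualEps_commutator_vecB_short (hi : 1 ≤ i) {k : ℕ} (hik : i < k) (hkn : k ≤ n) :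
    dualEps n i (x * vecB n (.inr k) - vecB n (.inr k) * x) = x (idx n i) (idx n k) := by
  simp (disch := omega) only [dualEps, entryLinearMap_apply, vecB, mul_sub, sub_mul,
    Matrix.sub_apply, mul_EB_idx_apply, EB_mul_idx_apply, if_neg, if_true, sub_zero]

theorem dualEps_commutator_vecB_sub (hi : 1 ≤ i) {k : ℕ} (hik : i < k) (hkn : k ≤ n) :
    dualEps n i (x * vecB n (.inl (false, i, k)) - vecB n (.inl (false, i, k)) * x) =
      -x (idx n k) (idx n (n + 1)) := by
  simp (disch := omega) only [dualEps, entryLinearMap_apply, vecB, mul_sub, sub_mul,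
    Matrix.sub_apply, mul_EB_idx_apply, EB_mul_idx_apply, if_neg, if_true, sub_zero, zero_sub]

end Bracket

abbrev SingEpsIndex (n i : ℕ) : Type := Finset.Ioc i n ⊕ Finset.Ioc i n

def singEpsRoot (n i : ℕ) : SingEpsIndex n i → BnRoot :=
  Sum.elim (fun k => .inl (false, i, k)) (fun k => .inr k)

noncomputable def singEpsCoord (n i : ℕ) :
    Matrix (Fin (2 * n + 1)) (Fin (2 * n + 1)) ℂ →ₗ[ℂ] SingEpsIndex n i → ℂ :=
  LinearMap.pi <| Sum.elim (fun k => entryLinearMap ℂ ℂ (idx n i) (idx n k))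
    (fun k => entryLinearMap ℂ ℂ (idx n k) (idx n (n + 1)))

section SingEps

variable {n i : ℕ}

@[simp]
theorem singEpsCoord_apply_inl (x : Matrix (Fin (2 * n + 1)) (Fin (2 * n + 1)) ℂ)
    (k : Finset.Ioc i n) : singEpsCoord n i x (.inl k) = x (idx n i) (idx n k) :=
  rfl

@[simp]
theorem singEpsCoord_apply_inr (x : Matrix (Fin (2 * n + 1)) (Fin (2 * n + 1)) ℂ)
    (k : Finset.Ioc i n) : singEpsCoord n i x (.inr k) = x (idx n k) (idx n (n + 1)) :=
  rfl

theorem card_singEpsIndex : Fintype.card (SingEpsIndex n i) = 2 * (n - i) := by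
  simp only [Fintype.card_sum, Fintype.card_coe, Nat.card_Ioc]; ring

theorem singEpsRoot_injective : Function.Injective (singEpsRoot n i) := by
  rintro (⟨k, _⟩ | ⟨k, _⟩) (⟨l, _⟩ | ⟨l, _⟩) h <;> simp_all [singEpsRoot]

theorem inSingEps_iff_mem_range {β : BnRoot} :
    inSingEps n i β ↔ β ∈ Set.range (singEpsRoot n i) := by
  constructor
  · rintro (⟨k, hik, hkn, rfl⟩ | ⟨k, hik, hkn, rfl⟩)
    · exact ⟨.inl ⟨k, Finset.mem_Ioc.2 ⟨hik, hkn⟩⟩, rfl⟩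
    · exact ⟨.inr ⟨k, Finset.mem_Ioc.2 ⟨hik, hkn⟩⟩, rfl⟩
  · rintro ⟨⟨k, hk⟩ | ⟨k, hk⟩, rfl⟩ <;> rw [Finset.mem_Ioc] at hk
    · exact .inl ⟨k, hk.1, hk.2, rfl⟩
    · exact .inr ⟨k, hk.1, hk.2, rfl⟩

theorem isPosB_singEpsRoot (hi : 1 ≤ i) (s : SingEpsIndex n i) :
    isPosB n (singEpsRoot n i s) := by
  rcases s with ⟨k, hk⟩ | ⟨k, hk⟩ <;> rw [Finset.mem_Ioc] at hk <;>
    simp only [singEpsRoot, Sum.elim_inl, Sum.elim_inr, isPosB] <;> omega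

theorem singEpsCoord_vecB_apply (hi : 1 ≤ i) {β : BnRoot} (hβ : isPosB n β)
    (t : SingEpsIndex n i) :
    singEpsCoord n i (vecB n β) t = if β = singEpsRoot n i t then 1 else 0 := by
  rcases t with ⟨k, hk⟩ | ⟨k, hk⟩ <;> rw [Finset.mem_Ioc] at hk <;>
    rcases β with ⟨_ | _, a, b⟩ | a <;> simp only [isPosB] at hβ <;>
    simp (disch := omega) only [singEpsCoord_apply_inl, singEpsCoord_apply_inr, singEpsRoot,
      Sum.elim_inl, Sum.elim_inr, vecB, Matrix.sub_apply, EB_idx_apply, Sum.inl.injEq,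
      Sum.inr.injEq, Prod.mk.injEq, reduceCtorEq, true_and, false_and, and_true,
      if_neg, if_false, sub_zero]

theorem singEpsCoord_vecB_singEpsRoot (hi : 1 ≤ i) (s : SingEpsIndex n i) :
    singEpsCoord n i (vecB n (singEpsRoot n i s)) = Pi.single s 1 := by
  ext t
  simp only [singEpsCoord_vecB_apply hi (isPosB_singEpsRoot hi s), singEpsRoot_injective.eq_iff,
    Pi.single_apply, eq_comm]

theorem span_vecB_not_inSingEps_le_ker (hi : 1 ≤ i) :
    span ℂ {m | ∃ β : BnRoot, isPosB n β ∧ ¬ inSingEps n i β ∧ m = vecB n β} ≤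
      LinearMap.ker (singEpsCoord n i) := by
  refine span_le.2 ?_
  rintro _ ⟨β, hβ, hS, rfl⟩
  ext t
  rw [singEpsCoord_vecB_apply hi hβ, if_neg (fun h => hS (inSingEps_iff_mem_range.2 ⟨t, h.symm⟩))]
  rfl

theorem gB_eq_sup (hi : 1 ≤ i) :
    gB n = span ℂ {m | ∃ β : BnRoot, isPosB n β ∧ ¬ inSingEps n i β ∧ m = vecB n β} ⊔
      span ℂ (Set.range (vecB n ∘ singEpsRoot n i)) := by
  rw [gB, ← span_union]
  congr 1
  ext m
  constructor
  · rintro ⟨β, hβ, rfl⟩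
    by_cases hS : inSingEps n i β
    · obtain ⟨s, rfl⟩ := inSingEps_iff_mem_range.1 hS
      exact .inr ⟨s, rfl⟩
    · exact .inl ⟨β, hβ, hS, rfl⟩
  · rintro (⟨β, hβ, -, rfl⟩ | ⟨s, rfl⟩)
    · exact ⟨β, hβ, rfl⟩
    · exact ⟨_, isPosB_singEpsRoot hi s, rfl⟩

end SingEps

theorem forall_dualEps_commutator_eq_zero_iff {n i : ℕ} (hi : 1 ≤ i) (hin : i ≤ n)
    {x : Matrix (Fin (2 * n + 1)) (Fin (2 * n + 1)) ℂ} (hx : x ∈ gB n) :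
    (∀ y ∈ gB n, dualEps n i (x * y - y * x) = 0) ↔ singEpsCoord n i x = 0 := by
  constructor
  · intro h
    ext (⟨k, hk⟩ | ⟨k, hk⟩) <;> obtain ⟨hik, hkn⟩ := Finset.mem_Ioc.1 hk <;> rw [Pi.zero_apply]
    · rw [singEpsCoord_apply_inl, ← dualEps_commutator_vecB_short x hi hik hkn]
      exact h _ (subset_span ⟨.inr k, ⟨by omega, hkn⟩, rfl⟩)
    · rw [singEpsCoord_apply_inr, ← neg_eq_zero, ← dualEps_commutator_vecB_sub x hi hik hkn]
      exact h _ (subset_span ⟨.inl (false, i, k), ⟨hi, hik, hkn⟩, rfl⟩)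
  · intro h0 y hy
    refine (span_le (p := LinearMap.ker (dualEps n i ∘ₗ
      (LinearMap.mulLeft ℂ x - LinearMap.mulRight ℂ x)))).2 ?_ hy
    rintro _ ⟨β, hβ, rfl⟩
    simp only [SetLike.mem_coe, LinearMap.mem_ker, LinearMap.comp_apply, LinearMap.sub_apply,
      LinearMap.mulLeft_apply, LinearMap.mulRight_apply]
    by_cases hS : inSingEps n i β
    · obtain ⟨⟨k, hk⟩ | ⟨k, hk⟩, rfl⟩ := inSingEps_iff_mem_range.1 hS <;>
        obtain ⟨hik, hkn⟩ := Finset.mem_Ioc.1 hk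
      · rw [singEpsRoot, Sum.elim_inl, dualEps_commutator_vecB_sub x hi hik hkn, neg_eq_zero]
        exact congrFun h0 (.inr ⟨k, hk⟩)
      · rw [singEpsRoot, Sum.elim_inr, dualEps_commutator_vecB_short x hi hik hkn]
        exact congrFun h0 (.inl ⟨k, hk⟩)
    · exact dualEps_commutator_vecB_of_not_inSingEps x hi hin hx hβ hS

/-- Let `g = B_n⁺` and `f = e*_{ε_i}` (the dual functional to `e_{ε_i}`, which reads the
`(i, n+1)` matrix entry), `1 ≤ i ≤ n`.  Then the radical
`g^f = {x ∈ g : f([x,y]) = 0 ∀ y ∈ g}` is spanned by the root vectors `e_β` with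
`β ∉ S(ε_i) = ⋃_{k=i+1}^{n} {ε_i − ε_k, ε_k}`; consequently `dim g/g^f = 2(n − i)`. -/
theorem stmt19 (n i : ℕ) (h1 : 1 ≤ i) (hin : i ≤ n)
    (W : Submodule ℂ (Matrix (Fin (2 * n + 1)) (Fin (2 * n + 1)) ℂ))
    (hW : W = Submodule.span ℂ
      {m | ∃ β : BnRoot, isPosB n β ∧ ¬ inSingEps n i β ∧ m = vecB n β}) :
    {x | x ∈ gB n ∧ ∀ y ∈ gB n,
        ((x * y - y * x) ((i - 1 : ℕ) : Fin (2 * n + 1)) ((n : ℕ) : Fin (2 * n + 1)) = 0)}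
      = (W : Set _) ∧
    Module.finrank ℂ (gB n) = Module.finrank ℂ W + 2 * (n - i) := by
  subst hW
  have hv : ∀ s, singEpsCoord n i ((vecB n ∘ singEpsRoot n i) s) = Pi.single s 1 :=
    singEpsCoord_vecB_singEpsRoot h1
  have hker := span_vecB_not_inSingEps_le_ker (n := n) h1
  refine ⟨Set.ext fun x => ?_, ?_⟩
  · rw [SetLike.mem_coe, ← mem_sup_span_range_and_eq_zero_iff hv hker, ← gB_eq_sup h1]
    exact and_congr_right (forall_dualEps_commutator_eq_zero_iff h1 hin)
  · rw [gB_eq_sup h1, finrank_sup_span_range hv hker, card_singEpsIndex]
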